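/- Every [t]-trade with nonempty legs has volume at least 2^t. -/
import Mathlib


/-- The size (number of ones) of a vector of `F_2^v`. -/
def size {v : ℕ} (x : Fin v → ZMod 2) : ℕ :=
  (Finset.univ.filter (fun j => x j = 1)).card

/-- A `[t]`-trade. -/
def IsTrade (t v : ℕ) (T0 T1 : Finset (Fin v → ZMod 2)) : Prop :=
  Disjoint T0 T1 ∧
  ∀ s : Fin v → ZMod 2, size s ≤ t →
    (T0.filter (fun x => ∀ j, s j = 1 → x j = 1)).card =
    (T1.filter (fun x => ∀ j, s j = 1 → x j = 1)).card

lemma zmod2_cases' (a : ZMod 2) : a = 0 ∨ a = 1 := by revert a; decide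

lemma zmod2_ne_one (a : ZMod 2) : a = 0 ↔ ¬ a = 1 := by revert a; decide

lemma trade_card_eq {t v : ℕ} {T0 T1 : Finset (Fin v → ZMod 2)}
    (h : IsTrade t v T0 T1) : T0.card = T1.card := by
  have h0 := h.2 0 (by simp [size, show ((0 : ZMod 2) = 1) ↔ False by decide])
  simpa [show ((0 : ZMod 2) = 1) ↔ False by decide] using h0

lemma size_update_le {v : ℕ} (s : Fin v → ZMod 2) (j : Fin v) :
    size (Function.update s j 1) ≤ size s + 1 := by
  unfold size
  have hsub : (Finset.univ.filter (fun k => Function.update s j 1 k = 1)) ⊆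
      insert j (Finset.univ.filter (fun k => s k = 1)) := by
    intro k hk
    simp only [Finset.mem_filter, Finset.mem_univ, true_and] at hk
    rcases eq_or_ne k j with rfl | hkj
    · exact Finset.mem_insert_self _ _
    · rw [Function.update_of_ne hkj] at hk
      exact Finset.mem_insert_of_mem (by simp [hk])
  calc _ ≤ (insert j (Finset.univ.filter (fun k => s k = 1))).card :=
        Finset.card_le_card hsub
    _ ≤ _ := Finset.card_insert_le _ _

lemma key_filter {v : ℕ} (T : Finset (Fin v → ZMod 2)) (j : Fin v)
    (s : Fin v → ZMod 2) :
    (T.filter (fun x => x j = 1)).filter (fun x => ∀ k, s k = 1 → x k = 1)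
      = T.filter (fun x => ∀ k, Function.update s j 1 k = 1 → x k = 1) := by
  rw [Finset.filter_filter]
  apply Finset.filter_congr
  intro x _
  constructor
  · rintro ⟨hxj, hs⟩ k hk
    rcases eq_or_ne k j with rfl | hkj
    · exact hxj
    · exact hs k (by rwa [Function.update_of_ne hkj] at hk)
  · intro H
    refine ⟨H j (by simp), fun k hk => ?_⟩
    rcases eq_or_ne k j with rfl | hkj
    · exact H k (by simp)
    · exact H k (by rwa [Function.update_of_ne hkj])

lemma split_filter {v : ℕ} (T : Finset (Fin v → ZMod 2)) (j : Fin v)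
    (p : (Fin v → ZMod 2) → Prop) [DecidablePred p] :
    ((T.filter (fun x => x j = 1)).filter p).card +
    ((T.filter (fun x => ¬ x j = 1)).filter p).card = (T.filter p).card := by
  have h := Finset.card_filter_add_card_filter_not
    (s := T.filter p) (p := fun x => x j = 1)
  have e1 : (T.filter p).filter (fun x => x j = 1)
      = (T.filter (fun x => x j = 1)).filter p := by
    ext x; simp only [Finset.mem_filter]; tauto
  have e2 : (T.filter p).filter (fun x => ¬ x j = 1)
      = (T.filter (fun x => ¬ x j = 1)).filter p := by
    ext x; simp only [Finset.mem_filter]; tauto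
  rw [e1, e2] at h
  exact h

/-- every `[t]`-trade with nonempty legs has volume at least `2^t`. -/
theorem tTrade_min_volume (v t : ℕ) (T0 T1 : Finset (Fin v → ZMod 2))
    (h : IsTrade t v T0 T1) (hne : T0.Nonempty) :
    2 ^ t ≤ T0.card := by
  induction t generalizing T0 T1 with
  | zero => simpa using Finset.card_pos.mpr hne
  | succ t ih =>
    obtain ⟨hd, hc⟩ := h
    have hcard : T0.card = T1.card := trade_card_eq ⟨hd, hc⟩
    have hT1 : T1.Nonempty := by
      rw [← Finset.card_pos, ← hcard]; exact Finset.card_pos.mpr hne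
    obtain ⟨x0, hx0⟩ := hne
    obtain ⟨x1, hx1⟩ := hT1
    have hxne : x0 ≠ x1 := fun e => Finset.disjoint_left.mp hd hx0 (e ▸ hx1)
    obtain ⟨j, hj⟩ : ∃ j, x0 j ≠ x1 j := Function.ne_iff.mp hxne
    have hAc : ∀ s : Fin v → ZMod 2, size s ≤ t →
        ((T0.filter (fun x => x j = 1)).filter (fun x => ∀ k, s k = 1 → x k = 1)).card =
        ((T1.filter (fun x => x j = 1)).filter (fun x => ∀ k, s k = 1 → x k = 1)).card := by
      intro s hs
      rw [key_filter, key_filter]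
      exact hc _ (le_trans (size_update_le s j) (Nat.succ_le_succ hs))
    have hBc : ∀ s : Fin v → ZMod 2, size s ≤ t →
        ((T0.filter (fun x => ¬ x j = 1)).filter (fun x => ∀ k, s k = 1 → x k = 1)).card =
        ((T1.filter (fun x => ¬ x j = 1)).filter (fun x => ∀ k, s k = 1 → x k = 1)).card := by
      intro s hs
      have e0 := split_filter T0 j (fun x => ∀ k, s k = 1 → x k = 1)
      have e1 := split_filter T1 j (fun x => ∀ k, s k = 1 → x k = 1)
      have hA := hAc s hs
      have hT := hc s (le_trans hs (Nat.le_succ t))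
      have e := e0.trans (hT.trans e1.symm)
      rw [hA] at e
      exact Nat.add_left_cancel e
    have htA : IsTrade t v (T0.filter (fun x => x j = 1)) (T1.filter (fun x => x j = 1)) :=
      ⟨Finset.disjoint_filter_filter hd, hAc⟩
    have htB : IsTrade t v (T0.filter (fun x => ¬ x j = 1)) (T1.filter (fun x => ¬ x j = 1)) :=
      ⟨Finset.disjoint_filter_filter hd, hBc⟩
    have hcA := trade_card_eq htA
    have hcB := trade_card_eq htB
    have hAne : (T0.filter (fun x => x j = 1)).Nonempty ∧
        (T0.filter (fun x => ¬ x j = 1)).Nonempty := by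
      rcases zmod2_cases' (x0 j) with h0 | h0 <;> rcases zmod2_cases' (x1 j) with h1 | h1
      · exact absurd (h0.trans h1.symm) hj
      · constructor
        · rw [← Finset.card_pos, hcA, Finset.card_pos]
          exact ⟨x1, Finset.mem_filter.mpr ⟨hx1, h1⟩⟩
        · exact ⟨x0, Finset.mem_filter.mpr ⟨hx0, (zmod2_ne_one _).mp h0⟩⟩
      · constructor
        · exact ⟨x0, Finset.mem_filter.mpr ⟨hx0, h0⟩⟩
        · rw [← Finset.card_pos, hcB, Finset.card_pos]
          exact ⟨x1, Finset.mem_filter.mpr ⟨hx1, (zmod2_ne_one _).mp h1⟩⟩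
      · exact absurd (h0.trans h1.symm) hj
    have hA2 := ih _ _ htA hAne.1
    have hB2 := ih _ _ htB hAne.2
    have hsplit := Finset.card_filter_add_card_filter_not
      (s := T0) (p := fun x => x j = 1)
    calc 2 ^ (t + 1) = 2 ^ t + 2 ^ t := by ring
      _ ≤ _ + _ := Nat.add_le_add hA2 hB2
      _ = T0.card := hsplit
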